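/- The E8 lattice Λ (defined with half-integer glue vectors as above) is self-dual: a vector v ∈ ℚ^Π lies in Λ if and only if ⟨v, w⟩ ∈ ℤ for all w ∈ Λ. -/

import Mathlib

/-- The E8 lattice inside ℚ^Π for Π = Fin 8: vectors whose coordinate sum is even
and whose coordinates are all integers or all half-integers. -/
def E8Lattice : Set (Fin 8 → ℚ) :=
  {v | (∃ m : ℤ, ∑ i, v i = 2 * m) ∧
    ((∀ i, ∃ n : ℤ, v i = n) ∨ (∀ i, ∃ n : ℤ, v i = n + 1/2))}

/-!
Write `h = (1/2, …, 1/2)`. Since `v ⬝ᵥ h` is half the coordinate sum and `h ⬝ᵥ h = 2`,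
`Λ = {v ∈ ℤ⁸ + ℤh | v ⬝ᵥ h ∈ ℤ}`. For `v = a + s h` and `w = b + t h` with `a, b ∈ ℤ⁸` and
`s, t ∈ ℤ`, bilinearity gives `v ⬝ᵥ w = a ⬝ᵥ b + t (v ⬝ᵥ h) + s (w ⬝ᵥ h) - 2st ∈ ℤ`.
Conversely, pairing a dual vector `v` with `h` and with `eᵢ + eⱼ` shows that `v ⬝ᵥ h` and all
`vᵢ + vⱼ` are integers; then `2v₀ ∈ ℤ` and `vᵢ - v₀ = (vᵢ + v₀) - 2v₀ ∈ ℤ`, so `v ∈ ℤ⁸ + ℤh`.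
-/

open Finset

lemma Rat.exists_int_eq_iff_mem_bot (q : ℚ) : (∃ n : ℤ, q = n) ↔ q ∈ (⊥ : Subring ℚ) :=
  (Subring.mem_bot.trans (exists_congr fun _ => eq_comm)).symm

section

variable {ι : Type*}

lemma add_smul_dotProduct_add_smul {R : Type*} [Fintype ι] [CommRing R]
    (a b h : ι → R) (s t : R) :
    (a + s • h) ⬝ᵥ (b + t • h) =
      a ⬝ᵥ b + t * ((a + s • h) ⬝ᵥ h) + s * ((b + t • h) ⬝ᵥ h) - s * t * (h ⬝ᵥ h) := by
  simp only [add_dotProduct, dotProduct_add, smul_dotProduct, dotProduct_smul, smul_eq_mul,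
    dotProduct_comm h b]
  ring

lemma dotProduct_mem_bot [Fintype ι] {a b : ι → ℚ}
    (ha : ∀ i, a i ∈ (⊥ : Subring ℚ)) (hb : ∀ i, b i ∈ (⊥ : Subring ℚ)) :
    a ⬝ᵥ b ∈ (⊥ : Subring ℚ) :=
  sum_mem fun i _ => mul_mem (ha i) (hb i)

lemma forall_int_or_forall_half_int_iff (v : ι → ℚ) :
    ((∀ i, ∃ n : ℤ, v i = n) ∨ (∀ i, ∃ n : ℤ, v i = n + 1 / 2)) ↔
      ∃ s : ℤ, ∀ i, v i - s / 2 ∈ (⊥ : Subring ℚ) := by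
  simp only [Rat.exists_int_eq_iff_mem_bot]
  constructor
  · rintro (hint | hhalf)
    · exact ⟨0, fun i => by simpa using hint i⟩
    · refine ⟨1, fun i => ?_⟩
      obtain ⟨n, hn⟩ := hhalf i
      exact Subring.mem_bot.mpr ⟨n, by rw [hn]; push_cast; ring⟩
  · rintro ⟨s, hs⟩
    rcases Int.even_or_odd' s with ⟨k, rfl | rfl⟩
    · left
      intro i
      have hvi : v i = (v i - ↑(2 * k) / 2) + k := by push_cast; ring
      exact hvi ▸ add_mem (hs i) (intCast_mem _ k)
    · right
      intro i
      obtain ⟨n, hn⟩ := Subring.mem_bot.mp (hs i)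
      exact ⟨n + k, by push_cast at hn ⊢; linarith⟩

lemma exists_forall_sub_half_mem_bot_of_add_mem_bot {v : ι → ℚ} (i₀ : ι)
    (hv : ∀ i j, v i + v j ∈ (⊥ : Subring ℚ)) :
    ∃ s : ℤ, ∀ i, v i - s / 2 ∈ (⊥ : Subring ℚ) := by
  obtain ⟨s, hs⟩ := Subring.mem_bot.mp (hv i₀ i₀)
  refine ⟨s, fun i => ?_⟩
  have hvi : v i - s / 2 = (v i + v i₀) - (v i₀ + v i₀) := by rw [hs]; ring
  exact hvi ▸ sub_mem (hv i i₀) (hv i₀ i₀)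

variable (ι) in
def halfVec : ι → ℚ := fun _ => 1 / 2

lemma dotProduct_halfVec [Fintype ι] (v : ι → ℚ) : v ⬝ᵥ halfVec ι = (∑ i, v i) / 2 := by
  simp only [dotProduct, halfVec, ← sum_mul]
  ring

lemma sub_smul_halfVec_apply (v : ι → ℚ) (s : ℚ) (i : ι) :
    (v - s • halfVec ι) i = v i - s / 2 := by
  simp only [Pi.sub_apply, Pi.smul_apply, halfVec, smul_eq_mul]
  ring

end

lemma halfVec_dotProduct_halfVec : halfVec (Fin 8) ⬝ᵥ halfVec (Fin 8) = 2 := by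
  simp only [dotProduct_halfVec, halfVec, sum_const, card_univ, Fintype.card_fin]
  norm_num

lemma mem_E8Lattice_iff (v : Fin 8 → ℚ) :
    v ∈ E8Lattice ↔ v ⬝ᵥ halfVec _ ∈ (⊥ : Subring ℚ) ∧
      ∃ s : ℤ, ∀ i, v i - s / 2 ∈ (⊥ : Subring ℚ) := by
  have hsum : (∃ m : ℤ, ∑ i, v i = 2 * m) ↔ v ⬝ᵥ halfVec _ ∈ (⊥ : Subring ℚ) := by
    rw [dotProduct_halfVec, ← Rat.exists_int_eq_iff_mem_bot]
    exact exists_congr fun m => by constructor <;> intro h <;> linarith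
  rw [E8Lattice, Set.mem_ofPred_eq, hsum, forall_int_or_forall_half_int_iff]

lemma dotProduct_mem_bot_of_mem_E8Lattice {v w : Fin 8 → ℚ}
    (hv : v ∈ E8Lattice) (hw : w ∈ E8Lattice) : v ⬝ᵥ w ∈ (⊥ : Subring ℚ) := by
  obtain ⟨hvh, s, hs⟩ := (mem_E8Lattice_iff v).mp hv
  obtain ⟨hwh, t, ht⟩ := (mem_E8Lattice_iff w).mp hw
  have ha : ∀ i, (v - (s : ℚ) • halfVec (Fin 8)) i ∈ (⊥ : Subring ℚ) := fun i => by
    rw [sub_smul_halfVec_apply]; exact hs i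
  have hb : ∀ i, (w - (t : ℚ) • halfVec (Fin 8)) i ∈ (⊥ : Subring ℚ) := fun i => by
    rw [sub_smul_halfVec_apply]; exact ht i
  have hdot := add_smul_dotProduct_add_smul (v - (s : ℚ) • halfVec (Fin 8))
    (w - (t : ℚ) • halfVec (Fin 8)) (halfVec (Fin 8)) s t
  rw [sub_add_cancel, sub_add_cancel, halfVec_dotProduct_halfVec] at hdot
  have hst : (s : ℚ) * t * 2 = ((s * t * 2 : ℤ) : ℚ) := by push_cast; ring
  rw [hdot, hst]
  exact sub_mem (add_mem (add_mem (dotProduct_mem_bot ha hb)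
    (mul_mem (intCast_mem _ t) hvh)) (mul_mem (intCast_mem _ s) hwh)) (intCast_mem _ _)

lemma halfVec_mem_E8Lattice : halfVec (Fin 8) ∈ E8Lattice := by
  refine (mem_E8Lattice_iff _).mpr ⟨halfVec_dotProduct_halfVec ▸ ofNat_mem _ 2, 1, fun i => ?_⟩
  simp [halfVec, zero_mem]

lemma single_add_single_mem_E8Lattice (i j : Fin 8) :
    Pi.single i 1 + Pi.single j 1 ∈ E8Lattice := by
  refine (mem_E8Lattice_iff _).mpr ⟨?_, 0, fun k => ?_⟩
  · simp only [add_dotProduct, single_dotProduct, one_mul, halfVec]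
    norm_num [one_mem]
  · simp only [Int.cast_zero, zero_div, sub_zero, Pi.add_apply, Pi.single_apply]
    split_ifs <;> norm_num [zero_mem, one_mem, ofNat_mem]

lemma mem_E8Lattice_of_forall_dotProduct_mem_bot {v : Fin 8 → ℚ}
    (hv : ∀ w ∈ E8Lattice, v ⬝ᵥ w ∈ (⊥ : Subring ℚ)) : v ∈ E8Lattice := by
  refine (mem_E8Lattice_iff v).mpr
    ⟨hv _ halfVec_mem_E8Lattice, exists_forall_sub_half_mem_bot_of_add_mem_bot 0 fun i j => ?_⟩
  simpa [dotProduct_add, dotProduct_single] using hv _ (single_add_single_mem_E8Lattice i j)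

theorem e8_is_self_dual (v : Fin 8 → ℚ) :
    v ∈ E8Lattice ↔ ∀ w ∈ E8Lattice, ∃ n : ℤ, ∑ i, v i * w i = n := by
  simp only [Rat.exists_int_eq_iff_mem_bot]
  exact ⟨fun hv _ hw => dotProduct_mem_bot_of_mem_E8Lattice hv hw,
    mem_E8Lattice_of_forall_dotProduct_mem_bot⟩
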